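/- arXiv:2104.09597 — 7 statements merged into one kernel-verified Lean document; each statement's English description precedes it below -/
import Mathlib

section
/- If S is a symmetric positive definite n×n matrix with nonpositive off-diagonal entries (a Stieltjes matrix), then S is invertible and all entries of S^{-1} are nonnegative. -/
/-!
Let `x` be a column of `S⁻¹`, so that `S x = eⱼ ≥ 0`, and split `x = x⁺ - x⁻`. Pairing with `x⁻`,
`0 ≤ x⁻ ⬝ S x = x⁻ ⬝ S x⁺ - x⁻ ⬝ S x⁻`. Since `x⁺` and `x⁻` have disjoint supports, only
off-diagonal entries of `S` enter `x⁻ ⬝ S x⁺`, which is therefore `≤ 0`; hence `x⁻ ⬝ S x⁻ ≤ 0`,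
and positive definiteness forces `x⁻ = 0`.
-/

open Matrix

theorem negPart_mul_posPart {R : Type*} [Ring R] [LinearOrder R] [IsOrderedRing R] (a : R) :
    a⁻ * a⁺ = 0 := by
  rcases le_total 0 a with ha | ha
  · rw [negPart_eq_zero.mpr ha, zero_mul]
  · rw [posPart_eq_zero.mpr ha, mul_zero]

namespace Matrix

variable {ι R : Type*} [Fintype ι]

theorem dotProduct_mulVec_nonpos_of_offDiag_nonpos [CommRing R] [PartialOrder R]
    [IsOrderedRing R] {S : Matrix ι ι R} (hoff : ∀ i j, i ≠ j → S i j ≤ 0) {y z : ι → R}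
    (hy : 0 ≤ y) (hz : 0 ≤ z) (hdisj : ∀ k, z k * y k = 0) : z ⬝ᵥ S *ᵥ y ≤ 0 := by
  simp only [dotProduct, mulVec, Finset.mul_sum]
  refine Finset.sum_nonpos fun k _ => Finset.sum_nonpos fun l _ => ?_
  rcases eq_or_ne k l with rfl | hkl
  · rw [mul_left_comm, hdisj k, mul_zero]
  · rw [mul_left_comm]
    exact mul_nonpos_of_nonpos_of_nonneg (hoff k l hkl) (mul_nonneg (hz k) (hy l))

theorem PosDef.nonneg_of_mulVec_nonneg [CommRing R] [LinearOrder R] [IsOrderedRing R]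
    [StarRing R] [TrivialStar R] {S : Matrix ι ι R} (hPD : S.PosDef)
    (hoff : ∀ i j, i ≠ j → S i j ≤ 0) {x : ι → R} (hSx : 0 ≤ S *ᵥ x) : 0 ≤ x := by
  rw [← negPart_eq_zero]
  by_contra hne
  have hquad : 0 < x⁻ ⬝ᵥ S *ᵥ x⁻ := by
    simpa only [star_trivial] using hPD.dotProduct_mulVec_pos hne
  have hcross : x⁻ ⬝ᵥ S *ᵥ x⁺ ≤ 0 :=
    dotProduct_mulVec_nonpos_of_offDiag_nonpos hoff (posPart_nonneg x) (negPart_nonneg x)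
      fun k => by rw [Pi.negPart_apply, Pi.posPart_apply, negPart_mul_posPart]
  have hpair : 0 ≤ x⁻ ⬝ᵥ S *ᵥ x⁺ - x⁻ ⬝ᵥ S *ᵥ x⁻ := by
    rw [← dotProduct_sub, ← mulVec_sub, posPart_sub_negPart]
    exact dotProduct_nonneg_of_nonneg (negPart_nonneg x) hSx
  exact hquad.not_ge ((sub_nonneg.mp hpair).trans hcross)

end Matrix

theorem stieltjes_inverse_nonneg {n : ℕ} (S : Matrix (Fin n) (Fin n) ℝ)
    (hPD : S.PosDef) (hoff : ∀ i j : Fin n, i ≠ j → S i j ≤ 0) :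
    IsUnit S.det ∧ ∀ i j : Fin n, 0 ≤ S⁻¹ i j := by
  have hdet : IsUnit S.det := (isUnit_iff_isUnit_det S).mp hPD.isUnit
  refine ⟨hdet, fun i j => ?_⟩
  have hcol : S *ᵥ (S⁻¹ *ᵥ Pi.single j 1) = Pi.single j 1 := by
    rw [mulVec_mulVec, mul_nonsing_inv S hdet, one_mulVec]
  have hnonneg := hPD.nonneg_of_mulVec_nonneg hoff (hcol ▸ Pi.single_nonneg.mpr zero_le_one)
  rw [mulVec_single_one] at hnonneg
  exact hnonneg i
end

section
/- Under assumptions (A1) and (A2), the unconstrained maximizer of profit, p̂ = S^{-1}(a + Dᵀc), satisfies p̂ ≥ c componentwise. -/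
/-!
Write `x = x⁺ - x⁻`. If `S` has nonpositive off-diagonal entries, the cross term `x⁻ ⬝ S x⁺`
is `≤ 0`, because `x⁻` and `x⁺` have disjoint supports; so `S x ≥ 0` forces
`x⁻ ⬝ S x⁻ ≤ 0`, i.e. `x⁻ = 0` when `S` is positive definite. Apply this to `x = p̂ - c`:
from `S p̂ = a + Dᵀc` and `S = D + Dᵀ` one gets `S (p̂ - c) = a - Dc ≥ 0`.
-/

open Matrix

variable {ι : Type*} [Fintype ι]

lemma Matrix.dotProduct_mulVec_nonpos_of_disjoint {R : Type*} [CommRing R] [LinearOrder R]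
    [IsStrictOrderedRing R] {S : Matrix ι ι R} (hoff : ∀ i j, i ≠ j → S i j ≤ 0)
    {u v : ι → R} (hu : 0 ≤ u) (hv : 0 ≤ v) (huv : ∀ i, u i * v i = 0) :
    u ⬝ᵥ S *ᵥ v ≤ 0 := by
  simp only [dotProduct, mulVec, Finset.mul_sum]
  refine Finset.sum_nonpos fun i _ => Finset.sum_nonpos fun j _ => ?_
  rcases eq_or_ne i j with rfl | hij
  · rw [mul_left_comm, huv, mul_zero]
  · exact mul_nonpos_of_nonneg_of_nonpos (hu i)
      (mul_nonpos_of_nonpos_of_nonneg (hoff i j hij) (hv j))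

theorem Matrix.PosDef.nonneg_of_mulVec_nonneg_s1 {S : Matrix ι ι ℝ} (hS : S.PosDef)
    (hoff : ∀ i j, i ≠ j → S i j ≤ 0) {x : ι → ℝ} (hx : 0 ≤ S *ᵥ x) : 0 ≤ x := by
  have hcross : x⁻ ⬝ᵥ S *ᵥ x⁺ ≤ 0 :=
    dotProduct_mulVec_nonpos_of_disjoint hoff (negPart_nonneg x) (posPart_nonneg x)
      fun i => by rcases le_total (x i) 0 with h | h <;> simp [h]
  have hquad : x⁻ ⬝ᵥ S *ᵥ x⁻ ≤ 0 := by
    have hsplit := congrArg (x⁻ ⬝ᵥ S *ᵥ ·) (posPart_sub_negPart x)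
    simp only [mulVec_sub, dotProduct_sub] at hsplit
    linarith [dotProduct_nonneg_of_nonneg (negPart_nonneg x) hx]
  have hneg : x⁻ = 0 := by
    by_contra hne
    simpa using (hS.dotProduct_mulVec_pos hne).trans_le hquad
  exact negPart_eq_zero.mp hneg

theorem unconstrained_maximizer_profitable_general {n : ℕ}
    (D : Matrix (Fin n) (Fin n) ℝ) (a c : Fin n → ℝ)
    (S : Matrix (Fin n) (Fin n) ℝ) (hS : S = D + Dᵀ)
    (hPD : S.PosDef) (hoff : ∀ i j : Fin n, i ≠ j → S i j ≤ 0)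
    (hdc : ∀ i, 0 ≤ (a - D.mulVec c) i)
    (phat : Fin n → ℝ) (hphat : phat = S⁻¹.mulVec (a + Dᵀ.mulVec c)) :
    ∀ i, c i ≤ phat i := by
  have hSphat : S *ᵥ phat = a + Dᵀ *ᵥ c := by
    rw [hphat, mulVec_mulVec, mul_nonsing_inv S hPD.det_pos.ne'.isUnit, one_mulVec]
  have hmargin : S *ᵥ (phat - c) = a - D *ᵥ c := by
    rw [mulVec_sub, hSphat, hS, add_mulVec]
    abel
  have hgap := hPD.nonneg_of_mulVec_nonneg_s1 hoff (hmargin ▸ hdc : 0 ≤ S *ᵥ (phat - c))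
  exact fun i => sub_nonneg.mp (hgap i)

theorem unconstrained_maximizer_profitable {n : ℕ}
    (D : Matrix (Fin n) (Fin n) ℝ) (a c : Fin n → ℝ)
    (S : Matrix (Fin n) (Fin n) ℝ) (hS : S = D + Dᵀ)
    (hPD : S.PosDef) (hoff : ∀ i j : Fin n, i ≠ j → S i j ≤ 0)
    (ha : ∀ i, 0 < a i) (hc : ∀ i, 0 < c i)
    (hdc : ∀ i, 0 ≤ (a - D.mulVec c) i)
    (phat : Fin n → ℝ) (hphat : phat = S⁻¹.mulVec (a + Dᵀ.mulVec c)) :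
    ∀ i, c i ≤ phat i :=
  unconstrained_maximizer_profitable_general D a c S hS hPD hoff hdc phat hphat
end

section
/- If p* is a global optimal solution of minimizing Q over Ω, and ω* is the set of indices i where p*_i ∈ {p⁰_i, p⁰_i + δ_i, p⁰_i - δ_i}, with complement ω̄*, then p*_{ω̄*} = S_{ω̄*,ω̄*}^{-1}(a_{ω̄*} + D_{•,ω̄*}ᵀ c - S_{ω̄*,ω*} p*_{ω*}). -/
/-!
At an index `i ∉ ω`, `p*_i` lies strictly inside one of the two rays allowed for coordinate `i`,
and `p*_i ≠ p⁰_i`, so moving `p*` along `eᵢ` by a small amount stays in `Ω` without enlarging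
its support. Hence `t ↦ Q (p* + t eᵢ)` has a local minimum at `0`, and its derivative there,
`(S p* - a - Dᵀc)ᵢ`, vanishes. Restricted to the free indices these stationarity equations read
`S_{ω̄ω̄} p*_{ω̄} = a_{ω̄} + (Dᵀc)_{ω̄} - S_{ω̄ω} p*_ω`, and `S_{ω̄ω̄}` is invertible as a principal
submatrix of a positive definite matrix.
-/

open Matrix Finset Filter Topology

section QuadraticObjective

variable {ι : Type*} [Fintype ι]

noncomputable def quadraticObjective (S : Matrix ι ι ℝ) (b p : ι → ℝ) : ℝ :=
  1 / 2 * (p ⬝ᵥ S *ᵥ p) - b ⬝ᵥ p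

variable [DecidableEq ι] {S : Matrix ι ι ℝ}

theorem quadraticObjective_add_single (hS : S.IsSymm) (b p : ι → ℝ) (i : ι) (t : ℝ) :
    quadraticObjective S b (p + Pi.single i t) =
      quadraticObjective S b p + t * ((S *ᵥ p) i - b i) + t ^ 2 / 2 * S i i := by
  have hcross : p ⬝ᵥ S *ᵥ Pi.single i t = (S *ᵥ p) i * t := by
    rw [dotProduct_mulVec, ← mulVec_transpose, hS.eq, dotProduct_single]
  have hdiag : (S *ᵥ Pi.single i t) i = S i i * t := dotProduct_single _ _ _
  simp only [quadraticObjective, mulVec_add, dotProduct_add, add_dotProduct, hcross,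
    single_dotProduct, dotProduct_single, hdiag]
  ring

theorem mulVec_apply_eq_of_isLocalMin_add_single (hS : S.IsSymm) {b p : ι → ℝ} {i : ι}
    (hmin : IsLocalMin (fun t => quadraticObjective S b (p + Pi.single i t)) 0) :
    (S *ᵥ p) i = b i := by
  have hderiv : HasDerivAt (fun t => quadraticObjective S b (p + Pi.single i t))
      ((S *ᵥ p) i - b i) 0 := by
    rw [funext (quadraticObjective_add_single hS b p i)]
    simpa [Pi.add_def] using (((hasDerivAt_id' (0 : ℝ)).mul_const ((S *ᵥ p) i - b i)).const_add
      (quadraticObjective S b p)).add (((hasDerivAt_pow 2 (0 : ℝ)).div_const 2).mul_const (S i i))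
  exact sub_eq_zero.mp (hmin.hasDerivAt_eq_zero hderiv)

end QuadraticObjective

section FeasibleSet

variable {ι : Type*} [Finite ι]

def sparseFeasibleSet (k : ℕ) (p0 δ : ι → ℝ) : Set (ι → ℝ) :=
  {p | {i | p i ≠ p0 i}.ncard ≤ k ∧ ∀ i, p i = p0 i ∨ p0 i + δ i ≤ p i ∨ p i ≤ p0 i - δ i}

theorem eventually_add_single_mem_sparseFeasibleSet [DecidableEq ι] {k : ℕ} {p0 δ p : ι → ℝ}
    (hp : p ∈ sparseFeasibleSet k p0 δ) {i : ι}
    (hi : ¬(p i = p0 i ∨ p i = p0 i + δ i ∨ p i = p0 i - δ i)) :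
    ∀ᶠ t in 𝓝 (0 : ℝ), p + Pi.single i t ∈ sparseFeasibleSet k p0 δ := by
  obtain ⟨hcard, hbox⟩ := hp
  push Not at hi
  obtain ⟨hne, hne_up, hne_down⟩ := hi
  have hray : ∀ᶠ t in 𝓝 (0 : ℝ), p0 i + δ i ≤ p i + t ∨ p i + t ≤ p0 i - δ i := by
    rcases hbox i with h | h | h
    · exact absurd h hne
    · filter_upwards [eventually_gt_nhds (by linarith [lt_of_le_of_ne h hne_up.symm] :
        p0 i + δ i - p i < 0)] with t ht
      exact Or.inl (by linarith)
    · filter_upwards [eventually_lt_nhds (by linarith [lt_of_le_of_ne h hne_down] :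
        (0 : ℝ) < p0 i - δ i - p i)] with t ht
      exact Or.inr (by linarith)
  filter_upwards [hray] with t ht
  have hsupp : {j | (p + Pi.single i t : ι → ℝ) j ≠ p0 j} ⊆ {j | p j ≠ p0 j} := by
    intro j hj
    rcases eq_or_ne j i with rfl | hji
    · exact hne
    · simpa [hji] using hj
  refine ⟨(Set.ncard_le_ncard hsupp).trans hcard, fun j => ?_⟩
  rcases eq_or_ne j i with rfl | hji
  · simpa using Or.inr ht
  · simpa [hji] using hbox j

end FeasibleSet

theorem submatrix_compl_mulVec_apply {ι R : Type*} [Fintype ι] [DecidableEq ι] [Ring R]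
    (S : Matrix ι ι R) (ω : Finset ι) (p : ι → R) (j : {i // i ∈ ωᶜ}) :
    (S.submatrix Subtype.val Subtype.val *ᵥ fun l : {i // i ∈ ωᶜ} => p l) j =
      (S *ᵥ p) j - ∑ l ∈ ω, S j l * p l := by
  rw [eq_sub_iff_add_eq, mulVec, dotProduct, mulVec, dotProduct, add_comm,
    ← sum_add_sum_compl ω, ← sum_coe_sort ωᶜ]
  rfl

theorem partial_optimality_general {n k : ℕ}
    (D : Matrix (Fin n) (Fin n) ℝ) (a c p0 δ : Fin n → ℝ)
    (S : Matrix (Fin n) (Fin n) ℝ) (hPD : S.PosDef)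
    (Q : (Fin n → ℝ) → ℝ)
    (hQ : ∀ p, Q p = (1/2) * (p ⬝ᵥ S.mulVec p) - (a + Dᵀ.mulVec c) ⬝ᵥ p)
    (Ω : Set (Fin n → ℝ))
    (hΩ : Ω = {p | {i | p i ≠ p0 i}.ncard ≤ k ∧
      ∀ i, p i = p0 i ∨ p0 i + δ i ≤ p i ∨ p i ≤ p0 i - δ i})
    (pstar : Fin n → ℝ) (hfeas : pstar ∈ Ω)
    (hopt : ∀ p ∈ Ω, Q pstar ≤ Q p)
    (ω : Finset (Fin n))
    (hω : ∀ i, i ∈ ω ↔ (pstar i = p0 i ∨ pstar i = p0 i + δ i ∨ pstar i = p0 i - δ i)) :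
    ∀ i : {i : Fin n // i ∈ ωᶜ},
      pstar (i : Fin n) =
        (S.submatrix (Subtype.val : {i : Fin n // i ∈ ωᶜ} → Fin n) Subtype.val)⁻¹.mulVec
          (fun j : {i : Fin n // i ∈ ωᶜ} =>
            a (j : Fin n) + Dᵀ.mulVec c (j : Fin n) - ∑ l ∈ ω, S (j : Fin n) l * pstar l) i := by
  have hQ' : Q = quadraticObjective S (a + Dᵀ *ᵥ c) := funext hQ
  change Ω = sparseFeasibleSet k p0 δ at hΩ
  subst hQ' hΩ
  have hstationary (j : Fin n) (hj : j ∉ ω) : (S *ᵥ pstar) j = (a + Dᵀ *ᵥ c) j := by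
    refine mulVec_apply_eq_of_isLocalMin_add_single (isHermitian_iff_isSymm.mp hPD.isHermitian) ?_
    filter_upwards [eventually_add_single_mem_sparseFeasibleSet hfeas ((hω j).not.mp hj)]
      with t ht
    simpa using hopt _ ht
  have : Invertible (S.submatrix (Subtype.val : {i : Fin n // i ∈ ωᶜ} → Fin n) Subtype.val) :=
    (hPD.submatrix Subtype.val_injective).isUnit.invertible
  have hsystem : (S.submatrix Subtype.val Subtype.val *ᵥ fun l : {i // i ∈ ωᶜ} => pstar l) =
      fun j : {i // i ∈ ωᶜ} => a j + (Dᵀ *ᵥ c) j - ∑ l ∈ ω, S j l * pstar l := by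
    ext j
    rw [submatrix_compl_mulVec_apply, hstationary j (mem_compl.mp j.2), Pi.add_apply]
  exact congrFun (inv_mulVec_eq_vec hsystem.symm).symm

theorem partial_optimality {n k : ℕ}
    (D : Matrix (Fin n) (Fin n) ℝ) (a c p0 δ : Fin n → ℝ) (hδ : ∀ i, 0 ≤ δ i)
    (S : Matrix (Fin n) (Fin n) ℝ) (hS : S = D + Dᵀ) (hPD : S.PosDef)
    (Q : (Fin n → ℝ) → ℝ)
    (hQ : ∀ p, Q p = (1/2) * (p ⬝ᵥ S.mulVec p) - (a + Dᵀ.mulVec c) ⬝ᵥ p)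
    (Ω : Set (Fin n → ℝ))
    (hΩ : Ω = {p | {i | p i ≠ p0 i}.ncard ≤ k ∧
      ∀ i, p i = p0 i ∨ p0 i + δ i ≤ p i ∨ p i ≤ p0 i - δ i})
    (pstar : Fin n → ℝ) (hfeas : pstar ∈ Ω)
    (hopt : ∀ p ∈ Ω, Q pstar ≤ Q p)
    (ω : Finset (Fin n))
    (hω : ∀ i, i ∈ ω ↔ (pstar i = p0 i ∨ pstar i = p0 i + δ i ∨ pstar i = p0 i - δ i)) :
    ∀ i : {i : Fin n // i ∈ ωᶜ},
      pstar (i : Fin n) =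
        (S.submatrix (Subtype.val : {i : Fin n // i ∈ ωᶜ} → Fin n) Subtype.val)⁻¹.mulVec
          (fun j : {i : Fin n // i ∈ ωᶜ} =>
            a (j : Fin n) + Dᵀ.mulVec c (j : Fin n) - ∑ l ∈ ω, S (j : Fin n) l * pstar l) i :=
  partial_optimality_general D a c p0 δ S hPD Q hQ Ω hΩ pstar hfeas hopt ω hω
end

section
/- Given q ∈ ℝⁿ, define Δ_i = (p⁰_i - q_i)² - d(q_i, P_i) for each i, and sort Δ_{(1)} ≥ ... ≥ Δ_{(n)}. Then the vector p̃ with p̃_i ∈ argmin_{p ∈ P_i}(p - q_i)² for i among the k largest Δ indices, and p̃_i = p⁰_i otherwise, is an optimal solution of min{‖p - q‖₂² : ‖p - p⁰‖₀ ≤ k, p_i ∈ P_i ∀i}, with optimal value ‖q - p⁰‖₂² - Σ_{i=1}^k Δ_{(i)}. -/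
open Finset

theorem projection_onto_feasible_set {n k : ℕ} (hkn : k ≤ n)
    (p0 δ q : Fin n → ℝ) (hδ : ∀ i, 0 ≤ δ i)
    (P : Fin n → Set ℝ)
    (hP : ∀ i, P i = {p0 i} ∪ Set.Ici (p0 i + δ i) ∪ Set.Iic (p0 i - δ i))
    (d : Fin n → ℝ) (hd : ∀ i, d i = sInf ((fun p => (p - q i) ^ 2) '' P i))
    (Δ : Fin n → ℝ) (hΔ : ∀ i, Δ i = (p0 i - q i) ^ 2 - d i)
    (Ω : Set (Fin n → ℝ))
    (hΩ : Ω = {p | {i | p i ≠ p0 i}.ncard ≤ k ∧ ∀ i, p i ∈ P i})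
    (σ : Finset (Fin n)) (hcard : σ.card = k)
    (htop : ∀ i ∈ σ, ∀ j ∉ σ, Δ j ≤ Δ i)
    (ptilde : Fin n → ℝ)
    (hin : ∀ i ∈ σ, ptilde i ∈ P i ∧ ∀ p' ∈ P i, (ptilde i - q i) ^ 2 ≤ (p' - q i) ^ 2)
    (hout : ∀ i ∉ σ, ptilde i = p0 i) :
    ptilde ∈ Ω ∧ (∀ p ∈ Ω, ∑ i, (ptilde i - q i) ^ 2 ≤ ∑ i, (p i - q i) ^ 2) ∧
      ∑ i, (ptilde i - q i) ^ 2 = ∑ i, (q i - p0 i) ^ 2 - ∑ i ∈ σ, Δ i := by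
  classical
  have hbdd : ∀ i, BddBelow ((fun p => (p - q i) ^ 2) '' P i) := by
    intro i
    refine ⟨0, ?_⟩
    rintro y ⟨x, -, rfl⟩
    positivity
  have hp0mem : ∀ i, p0 i ∈ P i := by
    intro i
    rw [hP]
    exact Or.inl (Or.inl rfl)
  have hdle : ∀ i, ∀ x ∈ P i, d i ≤ (x - q i) ^ 2 := by
    intro i x hx
    rw [hd]
    exact csInf_le (hbdd i) ⟨x, hx, rfl⟩
  have hΔnn : ∀ i, 0 ≤ Δ i := by
    intro i
    rw [hΔ]
    have := hdle i (p0 i) (hp0mem i)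
    linarith
  have hdσ : ∀ i ∈ σ, (ptilde i - q i) ^ 2 = d i := by
    intro i hi
    rw [hd]
    have hls : IsLeast ((fun p => (p - q i) ^ 2) '' P i) ((ptilde i - q i) ^ 2) :=
      ⟨⟨ptilde i, (hin i hi).1, rfl⟩, by rintro y ⟨x, hx, rfl⟩; exact (hin i hi).2 x hx⟩
    exact hls.csInf_eq.symm
  -- value equality
  have hval : ∑ i, (ptilde i - q i) ^ 2 = ∑ i, (q i - p0 i) ^ 2 - ∑ i ∈ σ, Δ i := by
    rw [← Finset.sum_add_sum_compl σ (fun i => (ptilde i - q i) ^ 2),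
        ← Finset.sum_add_sum_compl σ (fun i => (q i - p0 i) ^ 2)]
    have h1 : ∑ i ∈ σ, (ptilde i - q i) ^ 2 = ∑ i ∈ σ, ((q i - p0 i) ^ 2 - Δ i) := by
      refine Finset.sum_congr rfl fun i hi => ?_
      rw [hdσ i hi, hΔ]; ring
    have h2 : ∑ i ∈ σᶜ, (ptilde i - q i) ^ 2 = ∑ i ∈ σᶜ, (q i - p0 i) ^ 2 := by
      refine Finset.sum_congr rfl fun i hi => ?_
      rw [hout i (Finset.mem_compl.mp hi)]; ring
    rw [h1, h2, Finset.sum_sub_distrib]; ring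
  -- top-k property: for any finset T with card ≤ k, ∑ T Δ ≤ ∑ σ Δ
  have htopk : ∀ T : Finset (Fin n), T.card ≤ k → ∑ i ∈ T, Δ i ≤ ∑ i ∈ σ, Δ i := by
    intro T hT
    have hcards : (T \ σ).card ≤ (σ \ T).card := by
      have h1 := Finset.card_inter_add_card_sdiff T σ
      have h2 := Finset.card_inter_add_card_sdiff σ T
      rw [Finset.inter_comm] at h2
      omega
    have hdiff : ∑ i ∈ T \ σ, Δ i ≤ ∑ i ∈ σ \ T, Δ i := by
      rcases Finset.eq_empty_or_nonempty (T \ σ) with he | hne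
      · rw [he, Finset.sum_empty]
        exact Finset.sum_nonneg fun i _ => hΔnn i
      · have hne' : (σ \ T).Nonempty := by
          rw [← Finset.card_pos] at hne ⊢; omega
        obtain ⟨m, hm, hmin⟩ := Finset.exists_min_image (σ \ T) Δ hne'
        have hub : ∀ j ∈ T \ σ, Δ j ≤ Δ m := by
          intro j hj
          exact htop m (Finset.mem_sdiff.mp hm).1 j (Finset.mem_sdiff.mp hj).2
        calc ∑ i ∈ T \ σ, Δ i ≤ (T \ σ).card • Δ m :=
              Finset.sum_le_card_nsmul _ _ _ hub
          _ ≤ (σ \ T).card • Δ m := by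
              have := hΔnn m
              exact nsmul_le_nsmul_left (hΔnn m) hcards
          _ ≤ ∑ i ∈ σ \ T, Δ i := Finset.card_nsmul_le_sum _ _ _ hmin
    have hTsplit := Finset.sum_inter_add_sum_sdiff T σ Δ
    have hσsplit := Finset.sum_inter_add_sum_sdiff σ T Δ
    rw [Finset.inter_comm] at hσsplit
    linarith
  refine ⟨?_, ?_, hval⟩
  · rw [hΩ]
    constructor
    · have hsub : {i | ptilde i ≠ p0 i} ⊆ ↑σ := by
        intro i hi
        by_contra h
        exact hi (hout i h)
      calc {i | ptilde i ≠ p0 i}.ncard ≤ (↑σ : Set (Fin n)).ncard :=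
            Set.ncard_le_ncard hsub (Set.toFinite _)
        _ = σ.card := Set.ncard_coe_finset σ
        _ = k := hcard
    · intro i
      by_cases hi : i ∈ σ
      · exact (hin i hi).1
      · rw [hout i hi]; exact hp0mem i
  · intro p hp
    rw [hΩ] at hp
    obtain ⟨hpc, hpm⟩ := hp
    set T : Finset (Fin n) := Finset.univ.filter (fun i => p i ≠ p0 i) with hTdef
    have hTcard : T.card ≤ k := by
      have : {i | p i ≠ p0 i} = ↑T := by ext i; simp [hTdef]
      rw [this, Set.ncard_coe_finset] at hpc
      exact hpc
    have hg : ∑ i, ((p0 i - q i) ^ 2 - (p i - q i) ^ 2) ≤ ∑ i ∈ σ, Δ i := by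
      have hsum : ∑ i, ((p0 i - q i) ^ 2 - (p i - q i) ^ 2)
          = ∑ i ∈ T, ((p0 i - q i) ^ 2 - (p i - q i) ^ 2) := by
        refine (Finset.sum_subset (Finset.subset_univ T) ?_).symm
        intro i _ hi
        simp only [hTdef, Finset.mem_filter, Finset.mem_univ, true_and, not_not] at hi
        rw [hi]; ring
      rw [hsum]
      calc ∑ i ∈ T, ((p0 i - q i) ^ 2 - (p i - q i) ^ 2) ≤ ∑ i ∈ T, Δ i := by
            refine Finset.sum_le_sum fun i _ => ?_
            rw [hΔ]
            have := hdle i (p i) (hpm i)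
            linarith
        _ ≤ ∑ i ∈ σ, Δ i := htopk T hTcard
    have hexp : ∑ i, ((p0 i - q i) ^ 2 - (p i - q i) ^ 2)
        = ∑ i, (q i - p0 i) ^ 2 - ∑ i, (p i - q i) ^ 2 := by
      rw [Finset.sum_sub_distrib]
      congr 1
      exact Finset.sum_congr rfl fun i _ => by ring
    rw [hval]
    linarith [hg, hexp ▸ hg]
end

section
/- Let p̃ ∈ Ω_{k,p⁰,δ} with support σ = {i : p̃_i ≠ p⁰_i} of cardinality exactly k. Then p̃ is an optimal solution of the projection problem min{‖p - q‖₂² : p ∈ Ω_{k,p⁰,δ}} if and only if p̃_i ∈ argmin_{p ∈ P_i}(p - q_i)² for all i ∈ σ, and Δ_i ≥ Δ_j for all i ∈ σ, j ∉ σ. -/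
lemma min_on_P (a d q : ℝ) :
    ∃ m ∈ ({a} ∪ Set.Ici (a+d) ∪ Set.Iic (a-d) : Set ℝ),
      ∀ p' ∈ ({a} ∪ Set.Ici (a+d) ∪ Set.Iic (a-d) : Set ℝ), (m - q)^2 ≤ (p'-q)^2 := by
  set s : Set ℝ := {a} ∪ Set.Ici (a+d) ∪ Set.Iic (a-d) with hs
  have h1 : a ∈ s := Or.inl (Or.inl rfl)
  have h2 : max q (a+d) ∈ s := Or.inl (Or.inr (Set.mem_Ici.mpr (le_max_right _ _)))
  have h3 : min q (a-d) ∈ s := Or.inr (Set.mem_Iic.mpr (min_le_right _ _))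
  have ray1 : ∀ p', a+d ≤ p' → (max q (a+d) - q)^2 ≤ (p'-q)^2 := by
    intro p' hp'
    rcases le_total q (a+d) with h|h
    · rw [max_eq_right h]; nlinarith
    · rw [max_eq_left h]; simp; positivity
  have ray2 : ∀ p', p' ≤ a-d → (min q (a-d) - q)^2 ≤ (p'-q)^2 := by
    intro p' hp'
    rcases le_total q (a-d) with h|h
    · rw [min_eq_left h]; simp; positivity
    · rw [min_eq_right h]; nlinarith
  obtain ⟨m, hm, hm1, hm2, hm3⟩ : ∃ m ∈ s, (m-q)^2 ≤ (a-q)^2 ∧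
      (m-q)^2 ≤ (max q (a+d) - q)^2 ∧ (m-q)^2 ≤ (min q (a-d) - q)^2 := by
    rcases le_total ((a-q)^2) ((max q (a+d) - q)^2) with h12 | h12 <;>
      rcases le_total ((a-q)^2) ((min q (a-d) - q)^2) with h13|h13 <;>
      rcases le_total ((max q (a+d) - q)^2) ((min q (a-d) - q)^2) with h23|h23 <;>
      first
      | exact ⟨a, h1, by linarith, by linarith, by linarith⟩
      | exact ⟨max q (a+d), h2, by linarith, by linarith, by linarith⟩
      | exact ⟨min q (a-d), h3, by linarith, by linarith, by linarith⟩
  refine ⟨m, hm, ?_⟩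
  rintro p' ((h|h)|h)
  · simp only [Set.mem_singleton_iff] at h; subst h; exact hm1
  · exact le_trans hm2 (ray1 p' h)
  · exact le_trans hm3 (ray2 p' h)

open Finset

theorem projection_optimality_characterization {n k : ℕ}
    (p0 δ q : Fin n → ℝ) (hδ : ∀ i, 0 < δ i)
    (P : Fin n → Set ℝ)
    (hP : ∀ i, P i = {p0 i} ∪ Set.Ici (p0 i + δ i) ∪ Set.Iic (p0 i - δ i))
    (d : Fin n → ℝ) (hd : ∀ i, d i = sInf ((fun p => (p - q i) ^ 2) '' P i))
    (Δ : Fin n → ℝ) (hΔ : ∀ i, Δ i = (p0 i - q i) ^ 2 - d i)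
    (Ω : Set (Fin n → ℝ))
    (hΩ : Ω = {p | {i | p i ≠ p0 i}.ncard ≤ k ∧ ∀ i, p i ∈ P i})
    (ptilde : Fin n → ℝ) (hfeas : ptilde ∈ Ω)
    (σ : Finset (Fin n)) (hσ : ∀ i, i ∈ σ ↔ ptilde i ≠ p0 i) (hcard : σ.card = k) :
    (∀ p ∈ Ω, ∑ i, (ptilde i - q i) ^ 2 ≤ ∑ i, (p i - q i) ^ 2) ↔
      ((∀ i ∈ σ, ptilde i ∈ P i ∧ ∀ p' ∈ P i, (ptilde i - q i) ^ 2 ≤ (p' - q i) ^ 2) ∧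
        ∀ i ∈ σ, ∀ j ∉ σ, Δ j ≤ Δ i) := by
  -- minimizers
  have hmin : ∀ i, ∃ m ∈ P i, ∀ p' ∈ P i, (m - q i)^2 ≤ (p' - q i)^2 := by
    intro i; rw [hP i]; exact min_on_P (p0 i) (δ i) (q i)
  choose m hmP hmmin using hmin
  have hp0P : ∀ i, p0 i ∈ P i := by intro i; rw [hP i]; exact Or.inl (Or.inl rfl)
  have hd' : ∀ i, d i = (m i - q i)^2 := by
    intro i; rw [hd i]
    have hmem : (m i - q i)^2 ∈ (fun p => (p - q i) ^ 2) '' P i := ⟨m i, hmP i, rfl⟩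
    apply le_antisymm
    · apply csInf_le _ hmem
      refine ⟨0, ?_⟩
      rintro x ⟨p', hp', rfl⟩; positivity
    · apply le_csInf ⟨_, hmem⟩
      rintro x ⟨p', hp', rfl⟩; exact hmmin i p' hp'
  have hdle : ∀ i, ∀ p' ∈ P i, d i ≤ (p' - q i)^2 := by
    intro i p' h; rw [hd' i]; exact hmmin i p' h
  have hΔ0 : ∀ i, 0 ≤ Δ i := by
    intro i; rw [hΔ i]; have := hdle i (p0 i) (hp0P i); linarith
  rw [hΩ] at hfeas
  obtain ⟨hfc, hfP⟩ := hfeas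
  have hpt_eq : ∀ i, i ∉ σ → ptilde i = p0 i := by
    intro i h; by_contra hn; exact h ((hσ i).mpr hn)
  constructor
  · intro hopt
    have ha : ∀ i ∈ σ, ptilde i ∈ P i ∧ ∀ p' ∈ P i, (ptilde i - q i)^2 ≤ (p' - q i)^2 := by
      intro i hi
      refine ⟨hfP i, ?_⟩
      intro p' hp'
      by_contra hlt
      push_neg at hlt
      -- build the update point
      set pnew := Function.update ptilde i p' with hpnew
      have hmem : pnew ∈ Ω := by
        rw [hΩ]
        constructor
        · have hsub : {j | pnew j ≠ p0 j} ⊆ (σ : Set (Fin n)) := by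
            intro j hj
            by_cases hji : j = i
            · subst hji; exact hi
            · rw [Set.mem_setOf_eq, hpnew, Function.update_of_ne hji] at hj
              exact (hσ j).mpr hj
          calc {j | pnew j ≠ p0 j}.ncard ≤ (σ : Set (Fin n)).ncard :=
                Set.ncard_le_ncard hsub (Set.toFinite _)
            _ = σ.card := Set.ncard_coe_finset σ
            _ = k := hcard
        · intro j
          by_cases hji : j = i
          · subst hji; simpa [hpnew] using hp'
          · rw [hpnew, Function.update_of_ne hji]; exact hfP j
      have := hopt pnew hmem
      have hrw : (fun j => (pnew j - q j)^2)
          = Function.update (fun j => (ptilde j - q j)^2) i ((p' - q i)^2) := by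
        funext j
        by_cases hji : j = i
        · subst hji; simp [hpnew]
        · simp [hpnew, Function.update_of_ne hji]
      rw [show ∑ j, (pnew j - q j)^2 = ∑ j, Function.update (fun j => (ptilde j - q j)^2) i ((p' - q i)^2) j from by rw [← hrw]] at this
      rw [Finset.sum_update_of_mem (mem_univ i)] at this
      rw [← Finset.sum_add_sum_compl {i} (fun j => (ptilde j - q j)^2)] at this
      simp only [Finset.sum_singleton, Finset.compl_eq_univ_sdiff] at this
      linarith
    refine ⟨ha, ?_⟩
    intro i hi j hj
    by_contra hlt
    push_neg at hlt
    have hij : j ≠ i := fun h => hj (h ▸ hi)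
    have hptd : (ptilde i - q i)^2 = d i := by
      have h1 := (ha i hi).2 (m i) (hmP i)
      have h2 := hdle i (ptilde i) (hfP i)
      rw [hd' i]; linarith [hd' i ▸ h2]
    set pnew := Function.update (Function.update ptilde i (p0 i)) j (m j) with hpnew
    have hpnewi : pnew i = p0 i := by
      rw [hpnew, Function.update_of_ne (Ne.symm hij), Function.update_self]
    have hpnewj : pnew j = m j := by rw [hpnew, Function.update_self]
    have hpnewo : ∀ x, x ≠ i → x ≠ j → pnew x = ptilde x := by
      intro x hxi hxj
      rw [hpnew, Function.update_of_ne hxj, Function.update_of_ne hxi]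
    have hmem : pnew ∈ Ω := by
      rw [hΩ]
      constructor
      · have hsub : {x | pnew x ≠ p0 x} ⊆ ((insert j (σ.erase i) : Finset (Fin n)) : Set (Fin n)) := by
          intro x hx
          rw [Set.mem_setOf_eq] at hx
          by_cases hxj : x = j
          · subst hxj; simp
          · by_cases hxi : x = i
            · subst hxi; rw [hpnewi] at hx; exact absurd rfl hx
            · rw [hpnewo x hxi hxj] at hx
              simp [Finset.mem_insert, Finset.mem_erase, hxi, (hσ x).mpr hx]
        have hc : (insert j (σ.erase i)).card = k := by
          rw [Finset.card_insert_of_notMem (by simp [Finset.mem_erase, hj])]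
          rw [Finset.card_erase_of_mem hi, hcard]
          have : 1 ≤ k := hcard ▸ Finset.card_pos.mpr ⟨i, hi⟩
          omega
        calc {x | pnew x ≠ p0 x}.ncard ≤ _ := Set.ncard_le_ncard hsub (Set.toFinite _)
          _ = (insert j (σ.erase i)).card := Set.ncard_coe_finset _
          _ = k := hc
      · intro x
        by_cases hxj : x = j
        · rw [hxj, hpnewj]; exact hmP j
        · by_cases hxi : x = i
          · rw [hxi, hpnewi]; exact hp0P i
          · rw [hpnewo x hxi hxj]; exact hfP x
    have hle := hopt pnew hmem
    have hijd : i ≠ j := Ne.symm hij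
    have hsplit : ∀ f : Fin n → ℝ, ∑ x, f x = f i + f j + ∑ x ∈ ({i,j} : Finset (Fin n))ᶜ, f x := by
      intro f
      rw [← Finset.sum_add_sum_compl ({i,j} : Finset (Fin n)) f, Finset.sum_pair hijd]
    rw [hsplit (fun x => (ptilde x - q x)^2), hsplit (fun x => (pnew x - q x)^2)] at hle
    have hco : ∑ x ∈ ({i,j} : Finset (Fin n))ᶜ, (pnew x - q x)^2
        = ∑ x ∈ ({i,j} : Finset (Fin n))ᶜ, (ptilde x - q x)^2 := by
      apply Finset.sum_congr rfl
      intro x hx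
      simp only [Finset.mem_compl, Finset.mem_insert, Finset.mem_singleton, not_or] at hx
      rw [hpnewo x hx.1 hx.2]
    rw [hco] at hle
    have hptj : ptilde j = p0 j := hpt_eq j hj
    rw [hpnewi, hpnewj, hptj] at hle
    have hΔi := hΔ i; have hΔj := hΔ j
    have hdj := hd' j
    nlinarith [hle, hptd, hlt, hΔi, hΔj, hdj]
  · rintro ⟨ha, hb⟩
    intro p hp
    rw [hΩ] at hp
    obtain ⟨hpc, hpP⟩ := hp
    set S : Finset (Fin n) := univ.filter (fun i => p i ≠ p0 i) with hS
    have hScard : S.card ≤ k := by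
      have : {i | p i ≠ p0 i} = (S : Set (Fin n)) := by ext x; simp [hS]
      rw [this, Set.ncard_coe_finset] at hpc
      exact hpc
    have hpS : ∀ i, i ∉ S → p i = p0 i := by
      intro i h; by_contra hn; exact h (by simp [hS, hn])
    have hptd : ∀ i ∈ σ, (ptilde i - q i)^2 = d i := by
      intro i hi
      have h1 := (ha i hi).2 (m i) (hmP i)
      have h2 := hdle i (ptilde i) (hfP i)
      rw [hd' i] at *
      linarith
    -- lower bound for p's objective
    have hlow : ∑ x, (p0 x - q x)^2 - ∑ x ∈ S, Δ x ≤ ∑ x, (p x - q x)^2 := by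
      have e1 : ∑ x, (p x - q x)^2
          = ∑ x ∈ S, (p x - q x)^2 + ∑ x ∈ Sᶜ, (p x - q x)^2 :=
        (Finset.sum_add_sum_compl S _).symm
      have e2 : ∑ x, (p0 x - q x)^2
          = ∑ x ∈ S, (p0 x - q x)^2 + ∑ x ∈ Sᶜ, (p0 x - q x)^2 :=
        (Finset.sum_add_sum_compl S _).symm
      have e3 : ∑ x ∈ Sᶜ, (p x - q x)^2 = ∑ x ∈ Sᶜ, (p0 x - q x)^2 := by
        apply Finset.sum_congr rfl
        intro x hx
        rw [hpS x (Finset.mem_compl.mp hx)]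
      have e4 : ∑ x ∈ S, ((p0 x - q x)^2 - Δ x) ≤ ∑ x ∈ S, (p x - q x)^2 := by
        apply Finset.sum_le_sum
        intro x hx
        have := hdle x (p x) (hpP x)
        rw [hΔ x]; linarith
      rw [Finset.sum_sub_distrib] at e4
      linarith
    -- exact value of ptilde's objective
    have hval : ∑ x, (ptilde x - q x)^2 = ∑ x, (p0 x - q x)^2 - ∑ x ∈ σ, Δ x := by
      have e1 : ∑ x, (ptilde x - q x)^2
          = ∑ x ∈ σ, (ptilde x - q x)^2 + ∑ x ∈ σᶜ, (ptilde x - q x)^2 :=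
        (Finset.sum_add_sum_compl σ _).symm
      have e2 : ∑ x, (p0 x - q x)^2
          = ∑ x ∈ σ, (p0 x - q x)^2 + ∑ x ∈ σᶜ, (p0 x - q x)^2 :=
        (Finset.sum_add_sum_compl σ _).symm
      have e3 : ∑ x ∈ σᶜ, (ptilde x - q x)^2 = ∑ x ∈ σᶜ, (p0 x - q x)^2 := by
        apply Finset.sum_congr rfl
        intro x hx
        rw [hpt_eq x (Finset.mem_compl.mp hx)]
      have e4 : ∑ x ∈ σ, (ptilde x - q x)^2 = ∑ x ∈ σ, ((p0 x - q x)^2 - Δ x) := by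
        apply Finset.sum_congr rfl
        intro x hx
        rw [hptd x hx, hΔ x]; ring
      rw [Finset.sum_sub_distrib] at e4
      linarith
    -- combinatorial inequality : ∑ S Δ ≤ ∑ σ Δ
    have hcomb : ∑ x ∈ S, Δ x ≤ ∑ x ∈ σ, Δ x := by
      have eS : ∑ x ∈ S ∩ σ, Δ x + ∑ x ∈ S \ σ, Δ x = ∑ x ∈ S, Δ x :=
        Finset.sum_inter_add_sum_sdiff S σ Δ
      have eσ : ∑ x ∈ σ ∩ S, Δ x + ∑ x ∈ σ \ S, Δ x = ∑ x ∈ σ, Δ x :=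
        Finset.sum_inter_add_sum_sdiff σ S Δ
      have hie : S ∩ σ = σ ∩ S := Finset.inter_comm S σ
      have hcardle : (S \ σ).card ≤ (σ \ S).card := by
        have c1 := Finset.card_inter_add_card_sdiff S σ
        have c2 := Finset.card_inter_add_card_sdiff σ S
        have : (S ∩ σ).card = (σ ∩ S).card := by rw [hie]
        omega
      have hkey : ∑ x ∈ S \ σ, Δ x ≤ ∑ x ∈ σ \ S, Δ x := by
        rcases Finset.eq_empty_or_nonempty (S \ σ) with he | hne
        · rw [he, Finset.sum_empty]
          exact Finset.sum_nonneg (fun x _ => hΔ0 x)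
        · have hneσ : (σ \ S).Nonempty := by
            rw [← Finset.card_pos]
            have := Finset.card_pos.mpr hne
            omega
          obtain ⟨i0, hi0, hi0min⟩ := Finset.exists_min_image (σ \ S) Δ hneσ
          have hi0σ : i0 ∈ σ := (Finset.mem_sdiff.mp hi0).1
          calc ∑ x ∈ S \ σ, Δ x ≤ ∑ _x ∈ S \ σ, Δ i0 := by
                apply Finset.sum_le_sum
                intro x hx
                exact hb i0 hi0σ x (Finset.mem_sdiff.mp hx).2
            _ = (S \ σ).card • Δ i0 := Finset.sum_const _
            _ = ((S \ σ).card : ℝ) * Δ i0 := by rw [nsmul_eq_mul]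
            _ ≤ ((σ \ S).card : ℝ) * Δ i0 := by
                apply mul_le_mul_of_nonneg_right _ (hΔ0 i0)
                exact_mod_cast hcardle
            _ = (σ \ S).card • Δ i0 := by rw [nsmul_eq_mul]
            _ = ∑ _x ∈ σ \ S, Δ i0 := (Finset.sum_const _).symm
            _ ≤ ∑ x ∈ σ \ S, Δ x := Finset.sum_le_sum (fun x hx => hi0min x hx)
      rw [← eS, ← eσ, hie]
      linarith
    linarith
end

section
/- If p' is any point in the projection of p - (1/L)∇Q(p) onto Ω_{k,p⁰,δ}, where Q(p) = ½ pᵀSp - fᵀp with S symmetric positive definite with largest eigenvalue λ₁ and L > λ₁, then Q(p) - Q(p') ≥ ((L-λ₁)/2)‖p' - p‖₂², provided p ∈ Ω_{k,p⁰,δ}. -/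
/-!
Write `d = p' - p` and `g = S p - f = ∇Q(p)`. Since `Q` is quadratic,
`Q p - Q p' = -⟪g, d⟫ - ½ dᵀ S d`. Comparing the projection `p'` with the competitor `p ∈ Ω`
gives `‖d + g/L‖² ≤ ‖g/L‖²`, i.e. `⟪g, d⟫ ≤ -(L/2) ‖d‖²`, while `dᵀ S d ≤ λ₁ ‖d‖²`.
-/

open Matrix

open scoped MatrixOrder ComplexOrder in
theorem Matrix.IsHermitian.dotProduct_mulVec_le_of_eigenvalues_le {𝕜 ι : Type*} [RCLike 𝕜]
    [Fintype ι] [DecidableEq ι] {S : Matrix ι ι 𝕜} (hS : S.IsHermitian) {c : ℝ}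
    (hc : ∀ i, hS.eigenvalues i ≤ c) (x : ι → 𝕜) :
    star x ⬝ᵥ S *ᵥ x ≤ c * (star x ⬝ᵥ x) := by
  have hS_le : S ≤ algebraMap ℝ (Matrix ι ι 𝕜) c :=
    le_algebraMap_of_spectrum_le fun r hr => by
      obtain ⟨i, rfl⟩ := hS.spectrum_real_eq_range_eigenvalues ▸ hr
      exact hc i
  have := (Matrix.le_iff.mp hS_le).dotProduct_mulVec_nonneg x
  rwa [Algebra.algebraMap_eq_smul_one, sub_mulVec, smul_mulVec, one_mulVec, dotProduct_sub,
    dotProduct_smul, RCLike.real_smul_eq_coe_mul, sub_nonneg] at this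

section

variable {ι : Type*} [Fintype ι]

theorem Matrix.IsSymm.quadratic_sub_quadratic {S : Matrix ι ι ℝ} (hS : S.IsSymm)
    (f x y : ι → ℝ) :
    (1 / 2 * (x ⬝ᵥ S *ᵥ x) - f ⬝ᵥ x) - (1 / 2 * (y ⬝ᵥ S *ᵥ y) - f ⬝ᵥ y) =
      -((S *ᵥ x - f) ⬝ᵥ (y - x)) - 1 / 2 * ((y - x) ⬝ᵥ S *ᵥ (y - x)) := by
  have hxy : y ⬝ᵥ S *ᵥ x = x ⬝ᵥ S *ᵥ y := by
    rw [dotProduct_mulVec, ← mulVec_transpose, hS.eq, dotProduct_comm]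
  simp only [mulVec_sub, dotProduct_sub, sub_dotProduct, dotProduct_comm (S *ᵥ x), hxy]
  ring

/-- `h` says that `p'` is no farther than `p` itself from the gradient step `p - g / L`. -/
theorem dotProduct_sub_le_of_sum_sq_le {L : ℝ} (hL : 0 < L) {g p p' : ι → ℝ}
    (h : ∑ i, (p' i - (p i - 1 / L * g i)) ^ 2 ≤ ∑ i, (p i - (p i - 1 / L * g i)) ^ 2) :
    g ⬝ᵥ (p' - p) ≤ -(L / 2) * ((p' - p) ⬝ᵥ (p' - p)) := by
  have hterm : ∀ i, (p' i - (p i - 1 / L * g i)) ^ 2 - (p i - (p i - 1 / L * g i)) ^ 2 =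
      2 / L * (g i * (p' i - p i) + L / 2 * ((p' i - p i) * (p' i - p i))) := by
    intro i
    field_simp
    ring
  have hsum : 2 / L * ∑ i, (g i * (p' i - p i) + L / 2 * ((p' i - p i) * (p' i - p i))) ≤ 0 := by
    rw [Finset.mul_sum, ← Finset.sum_congr rfl fun i _ => hterm i, Finset.sum_sub_distrib]
    linarith
  have := nonpos_of_mul_nonpos_right hsum (by positivity)
  rw [Finset.sum_add_distrib, ← Finset.mul_sum] at this
  simp only [dotProduct, Pi.sub_apply]
  linarith

end

theorem gradient_projection_decrease_general {n : ℕ}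
    (S : Matrix (Fin n) (Fin n) ℝ) (f : Fin n → ℝ) (hPD : S.PosDef)
    (Q : (Fin n → ℝ) → ℝ)
    (hQ : ∀ p, Q p = (1/2) * (p ⬝ᵥ S.mulVec p) - f ⬝ᵥ p)
    (lam1 : ℝ) (hlam1 : IsGreatest (Set.range hPD.1.eigenvalues) lam1)
    (L : ℝ) (hL : lam1 < L)
    (Ω : Set (Fin n → ℝ))
    (p p' : Fin n → ℝ) (hp : p ∈ Ω)
    (hproj : ∀ p'' ∈ Ω,
      ∑ i, (p' i - (p i - (1/L) * (S.mulVec p - f) i)) ^ 2 ≤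
        ∑ i, (p'' i - (p i - (1/L) * (S.mulVec p - f) i)) ^ 2) :
    Q p - Q p' ≥ ((L - lam1) / 2) * ∑ i, (p' i - p i) ^ 2 := by
  obtain ⟨i₀, rfl⟩ := hlam1.1
  have hL_pos : 0 < L := (hPD.eigenvalues_pos i₀).trans hL
  have hstep := dotProduct_sub_le_of_sum_sq_le hL_pos (hproj p hp)
  have hcurv : (p' - p) ⬝ᵥ S *ᵥ (p' - p) ≤ hPD.1.eigenvalues i₀ * ((p' - p) ⬝ᵥ (p' - p)) := by
    simpa using hPD.1.dotProduct_mulVec_le_of_eigenvalues_le (fun i => hlam1.2 ⟨i, rfl⟩) (p' - p)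
  have hnorm : (p' - p) ⬝ᵥ (p' - p) = ∑ i, (p' i - p i) ^ 2 := by
    simp only [dotProduct, Pi.sub_apply, sq]
  rw [hQ, hQ, (isHermitian_iff_isSymm.mp hPD.1).quadratic_sub_quadratic, ← hnorm]
  linarith

theorem gradient_projection_decrease {n k : ℕ}
    (S : Matrix (Fin n) (Fin n) ℝ) (f p0 δ : Fin n → ℝ) (hPD : S.PosDef)
    (hδ : ∀ i, 0 < δ i)
    (Q : (Fin n → ℝ) → ℝ)
    (hQ : ∀ p, Q p = (1/2) * (p ⬝ᵥ S.mulVec p) - f ⬝ᵥ p)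
    (lam1 : ℝ) (hlam1 : IsGreatest (Set.range hPD.1.eigenvalues) lam1)
    (L : ℝ) (hL : lam1 < L)
    (Ω : Set (Fin n → ℝ))
    (hΩ : Ω = {p | {i | p i ≠ p0 i}.ncard ≤ k ∧
      ∀ i, p i = p0 i ∨ p0 i + δ i ≤ p i ∨ p i ≤ p0 i - δ i})
    (p p' : Fin n → ℝ) (hp : p ∈ Ω) (hp' : p' ∈ Ω)
    (hproj : ∀ p'' ∈ Ω,
      ∑ i, (p' i - (p i - (1/L) * (S.mulVec p - f) i)) ^ 2 ≤
        ∑ i, (p'' i - (p i - (1/L) * (S.mulVec p - f) i)) ^ 2) :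
    Q p - Q p' ≥ ((L - lam1) / 2) * ∑ i, (p' i - p i) ^ 2 :=
  gradient_projection_decrease_general S f hPD Q hQ lam1 hlam1 L hL Ω p p' hp hproj
end

section
/- Let {pᵗ} be a gradient-projection sequence with ‖pᵗ⁺¹ - pᵗ‖₂ → 0. Define index sets αᵗ = {i : pᵗ_i = p⁰_i}, βᵗ = {i : pᵗ_i ≥ p⁰_i + δ_i}, γᵗ = {i : pᵗ_i ≤ p⁰_i - δ_i}, where all δ_i > 0 and each pᵗ ∈ P_δ = ∏_i ({p⁰_i} ∪ [p⁰_i+δ_i,∞) ∪ (-∞,p⁰_i-δ_i]). Then there exists T such that αᵗ = α^T, βᵗ = β^T, γᵗ = γ^T for all t ≥ T. -/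
open Filter

lemma step_same_region (c d a b : ℝ) (hd : 0 < d)
    (ha : a = c ∨ c + d ≤ a ∨ a ≤ c - d)
    (hb : b = c ∨ c + d ≤ b ∨ b ≤ c - d)
    (hab : |a - b| < d) :
    (a = c ↔ b = c) ∧ (c + d ≤ a ↔ c + d ≤ b) ∧ (a ≤ c - d ↔ b ≤ c - d) := by
  rw [abs_sub_lt_iff] at hab
  obtain ⟨h1, h2⟩ := hab
  rcases ha with ha|ha|ha <;> rcases hb with hb|hb|hb <;>
    exact ⟨⟨fun h => by linarith, fun h => by linarith⟩,
      ⟨fun h => by linarith, fun h => by linarith⟩,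
      ⟨fun h => by linarith, fun h => by linarith⟩⟩

theorem index_sets_stabilize {n : ℕ}
    (p0 δ : Fin n → ℝ) (hδ : ∀ i, 0 < δ i)
    (p : ℕ → Fin n → ℝ)
    (hfeas : ∀ t i, p t i = p0 i ∨ p0 i + δ i ≤ p t i ∨ p t i ≤ p0 i - δ i)
    (hdiff : Tendsto (fun t => Real.sqrt (∑ i, (p (t+1) i - p t i) ^ 2)) atTop (nhds 0)) :
    ∃ T : ℕ, ∀ t ≥ T, ∀ i,
      (p t i = p0 i ↔ p T i = p0 i) ∧
      (p0 i + δ i ≤ p t i ↔ p0 i + δ i ≤ p T i) ∧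
      (p t i ≤ p0 i - δ i ↔ p T i ≤ p0 i - δ i) := by
  rcases Nat.eq_zero_or_pos n with hn | hn
  · exact ⟨0, fun t _ i => by subst hn; exact i.elim0⟩
  have hne : Nonempty (Fin n) := ⟨⟨0, hn⟩⟩
  set m := Finset.univ.inf' Finset.univ_nonempty δ with hm_def
  have hm : 0 < m := by
    rw [hm_def, Finset.lt_inf'_iff]
    exact fun i _ => hδ i
  have hev : ∀ᶠ t in atTop, Real.sqrt (∑ i, (p (t+1) i - p t i) ^ 2) < m :=
    hdiff.eventually (gt_mem_nhds hm)
  obtain ⟨T, hT⟩ := eventually_atTop.mp hev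
  have key : ∀ t ≥ T, ∀ i, |p (t+1) i - p t i| < δ i := by
    intro t ht i
    have h1 : |p (t+1) i - p t i| ≤ Real.sqrt (∑ j, (p (t+1) j - p t j) ^ 2) := by
      rw [← Real.sqrt_sq_eq_abs]
      exact Real.sqrt_le_sqrt
        (Finset.single_le_sum (f := fun j => (p (t+1) j - p t j) ^ 2) (fun j _ => sq_nonneg _) (Finset.mem_univ i))
    have h3 : m ≤ δ i := Finset.inf'_le _ (Finset.mem_univ i)
    have h2 := hT t ht
    linarith
  refine ⟨T, fun t ht i => ?_⟩
  induction t, ht using Nat.le_induction with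
  | base => exact ⟨Iff.rfl, Iff.rfl, Iff.rfl⟩
  | succ t ht ih =>
    obtain ⟨s1, s2, s3⟩ := step_same_region (p0 i) (δ i) (p (t+1) i) (p t i)
      (hδ i) (hfeas _ i) (hfeas _ i) (key t ht i)
    obtain ⟨i1, i2, i3⟩ := ih
    exact ⟨s1.trans i1, s2.trans i2, s3.trans i3⟩
end
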